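/- arXiv:2205.09961 — 2 statements merged into one kernel-verified Lean document; each statement's English description precedes it below -/
import Mathlib

section
/- Let V be a nonempty finite set and let S ⊆ ℤ^V be given in box–difference form with data α_i ∈ ℤ ∪ {−∞}, β_i ∈ ℤ ∪ {+∞}, γ_ij ∈ ℤ ∪ {+∞}, and let C ⊆ ℝ^V be the set of real vectors satisfying the same inequality constraints. Let p* ∈ S, p̂ ∈ ℝ^V, and let P(p̂) ∈ C minimize ‖q − p̂‖∞^± over q ∈ C. Then the componentwise rounding p° = ⌊P(p̂)⌉ (nearest integer, ties rounded down) satisfies p° ∈ S and ‖p* − p°‖∞^± ≤ 4‖p* − p̂‖∞ + 1. -/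
/-- Rounding a real number to the nearest integer, with ties
(fractional part exactly `0.5`) rounded down. -/
noncomputable def roundHalfDown (x : ℝ) : ℤ := ⌈x - 1 / 2⌉

/-- A real vector `p` satisfies the box–difference constraints given by
`α : V → ℤ ∪ {−∞}`, `β : V → ℤ ∪ {+∞}` and `γ : V × V → ℤ ∪ {+∞}`. -/
def SatisfiesReal {V : Type*} (α : V → WithBot ℤ) (β : V → WithTop ℤ)
    (γ : V → V → WithTop ℤ) (p : V → ℝ) : Prop :=
  (∀ i, (α i).map (Int.cast : ℤ → ℝ) ≤ (p i : WithBot ℝ)) ∧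
  (∀ i, ((p i : ℝ) : WithTop ℝ) ≤ (β i).map (Int.cast : ℤ → ℝ)) ∧
  (∀ i j, i ≠ j → ((p j - p i : ℝ) : WithTop ℝ) ≤ (γ i j).map (Int.cast : ℤ → ℝ))

/-- An integer vector `p` satisfies the box–difference constraints, i.e. belongs to the
set `S` in box–difference form. -/
def SatisfiesInt {V : Type*} (α : V → WithBot ℤ) (β : V → WithTop ℤ)
    (γ : V → V → WithTop ℤ) (p : V → ℤ) : Prop :=
  (∀ i, α i ≤ (p i : WithBot ℤ)) ∧
  (∀ i, ((p i : ℤ) : WithTop ℤ) ≤ β i) ∧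
  (∀ i j, i ≠ j → ((p j - p i : ℤ) : WithTop ℤ) ≤ γ i j)


/-- `‖p‖∞⁺ = max_{i∈V} max{0, p_i}`. -/
noncomputable def normInfPlus {V : Type*} [Fintype V] [Nonempty V] (p : V → ℝ) : ℝ :=
  Finset.univ.sup' Finset.univ_nonempty fun i => max 0 (p i)

/-- `‖p‖∞⁻ = max_{i∈V} max{0, −p_i}`. -/
noncomputable def normInfMinus {V : Type*} [Fintype V] [Nonempty V] (p : V → ℝ) : ℝ :=
  Finset.univ.sup' Finset.univ_nonempty fun i => max 0 (-p i)

/-- `‖p‖∞^± = ‖p‖∞⁺ + ‖p‖∞⁻`. -/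
noncomputable def normInfPM {V : Type*} [Fintype V] [Nonempty V] (p : V → ℝ) : ℝ :=
  normInfPlus p + normInfMinus p

/-- `‖p‖∞ = max_{i∈V} |p_i|`. -/
noncomputable def normInf {V : Type*} [Fintype V] [Nonempty V] (p : V → ℝ) : ℝ :=
  Finset.univ.sup' Finset.univ_nonempty fun i => |p i|

lemma rhd_lb (x : ℝ) : x - 1/2 ≤ (roundHalfDown x : ℝ) := Int.le_ceil _

lemma rhd_ub (x : ℝ) : (roundHalfDown x : ℝ) ≤ x + 1/2 := by
  have := Int.ceil_lt_add_one (x - 1/2)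
  unfold roundHalfDown; linarith

lemma rhd_ge {a : ℤ} {x : ℝ} (h : (a:ℝ) ≤ x) : a ≤ roundHalfDown x := by
  rw [roundHalfDown, Int.le_ceil_iff]; linarith

lemma rhd_le {b : ℤ} {x : ℝ} (h : x ≤ (b:ℝ)) : roundHalfDown x ≤ b := by
  rw [roundHalfDown, Int.ceil_le]; linarith

lemma rhd_diff {c : ℤ} {x y : ℝ} (h : y - x ≤ (c:ℝ)) :
    roundHalfDown y - roundHalfDown x ≤ c := by
  have h1 : roundHalfDown y ≤ roundHalfDown x + c := by
    rw [roundHalfDown, Int.ceil_le]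
    push_cast
    have hc := Int.le_ceil (x - 1/2)
    unfold roundHalfDown
    linarith
  omega

lemma normInfPlus_le {V : Type*} [Fintype V] [Nonempty V] {p : V → ℝ} {c : ℝ}
    (h0 : 0 ≤ c) (h : ∀ i, p i ≤ c) : normInfPlus p ≤ c :=
  Finset.sup'_le _ _ fun i _ => max_le h0 (h i)

lemma normInfMinus_le {V : Type*} [Fintype V] [Nonempty V] {p : V → ℝ} {c : ℝ}
    (h0 : 0 ≤ c) (h : ∀ i, -p i ≤ c) : normInfMinus p ≤ c :=
  Finset.sup'_le _ _ fun i _ => max_le h0 (h i)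

lemma le_normInfPlus {V : Type*} [Fintype V] [Nonempty V] (p : V → ℝ) (i : V) :
    p i ≤ normInfPlus p :=
  le_trans (le_max_right _ _) (Finset.le_sup' (fun j => max 0 (p j)) (Finset.mem_univ i))

lemma le_normInfMinus {V : Type*} [Fintype V] [Nonempty V] (p : V → ℝ) (i : V) :
    -p i ≤ normInfMinus p :=
  le_trans (le_max_right _ _) (Finset.le_sup' (fun j => max 0 (-p j)) (Finset.mem_univ i))

lemma normInfPlus_nonneg {V : Type*} [Fintype V] [Nonempty V] (p : V → ℝ) :
    0 ≤ normInfPlus p := by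
  obtain ⟨i⟩ := ‹Nonempty V›
  exact le_trans (le_max_left 0 (p i)) (Finset.le_sup' (fun j => max 0 (p j)) (Finset.mem_univ i))

lemma normInfMinus_nonneg {V : Type*} [Fintype V] [Nonempty V] (p : V → ℝ) :
    0 ≤ normInfMinus p := by
  obtain ⟨i⟩ := ‹Nonempty V›
  exact le_trans (le_max_left 0 (-p i)) (Finset.le_sup' (fun j => max 0 (-p j)) (Finset.mem_univ i))

/-- If `p* ∈ S` (box–difference form), `P(p̂)` is an `‖·‖∞^±`-projection of `p̂` onto the real
relaxation `C` of `S`, then the rounding `p° = ⌊P(p̂)⌉` lies in `S` and satisfies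
`‖p* − p°‖∞^± ≤ 4‖p* − p̂‖∞ + 1`. -/
theorem stmt7 {V : Type*} [Fintype V] [Nonempty V] (α : V → WithBot ℤ) (β : V → WithTop ℤ)
    (γ : V → V → WithTop ℤ) (pstar : V → ℤ) (hstar : SatisfiesInt α β γ pstar)
    (phat P : V → ℝ) (hPfeas : SatisfiesReal α β γ P)
    (hPmin : ∀ q : V → ℝ, SatisfiesReal α β γ q →
      normInfPM (fun i => P i - phat i) ≤ normInfPM (fun i => q i - phat i)) :
    SatisfiesInt α β γ (fun i => roundHalfDown (P i)) ∧
      normInfPM (fun i => (pstar i : ℝ) - ((roundHalfDown (P i) : ℤ) : ℝ)) ≤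
        4 * normInf (fun i => (pstar i : ℝ) - phat i) + 1 := by
  obtain ⟨hα, hβ, hγ⟩ := hPfeas
  obtain ⟨hsα, hsβ, hsγ⟩ := hstar
  constructor
  · refine ⟨fun i => ?_, fun i => ?_, fun i j hij => ?_⟩
    · have := hα i
      cases hA : α i with
      | bot => exact bot_le
      | coe a =>
        rw [hA] at this
        rw [WithBot.map_coe] at this
        rw [WithBot.coe_le_coe] at this ⊢
        exact rhd_ge this
    · have := hβ i
      cases hB : β i with
      | top => exact le_top
      | coe b =>
        rw [hB] at this
        rw [WithTop.map_coe] at this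
        rw [WithTop.coe_le_coe] at this ⊢
        exact rhd_le this
    · have := hγ i j hij
      cases hC : γ i j with
      | top => exact le_top
      | coe c =>
        rw [hC] at this
        rw [WithTop.map_coe] at this
        rw [WithTop.coe_le_coe] at this ⊢
        exact rhd_diff this
  · set r := normInf (fun i => (pstar i : ℝ) - phat i) with hrdef
    have hr : ∀ i, |(pstar i : ℝ) - phat i| ≤ r := fun i =>
      Finset.le_sup' (f := fun i => |(pstar i : ℝ) - phat i|) (Finset.mem_univ i)
    have hr0 : 0 ≤ r := le_trans (abs_nonneg _) (hr (Classical.arbitrary V))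
    -- pstar is feasible over the reals
    have hq : SatisfiesReal α β γ (fun i => (pstar i : ℝ)) := by
      refine ⟨fun i => ?_, fun i => ?_, fun i j hij => ?_⟩
      · have := hsα i
        cases hA : α i with
        | bot => exact bot_le
        | coe a =>
          rw [hA, WithBot.coe_le_coe] at this
          rw [WithBot.map_coe, WithBot.coe_le_coe]
          show (a:ℝ) ≤ (pstar i : ℝ)
          exact_mod_cast this
      · have := hsβ i
        cases hB : β i with
        | top => exact le_top
        | coe b =>
          rw [hB, WithTop.coe_le_coe] at this
          rw [WithTop.map_coe, WithTop.coe_le_coe]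
          show (pstar i : ℝ) ≤ (b:ℝ)
          exact_mod_cast this
      · have := hsγ i j hij
        cases hC : γ i j with
        | top => exact le_top
        | coe c =>
          rw [hC, WithTop.coe_le_coe] at this
          rw [WithTop.map_coe, WithTop.coe_le_coe]
          push_cast
          exact_mod_cast this
    have hmin := hPmin _ hq
    have h2 : normInfPM (fun i => (pstar i : ℝ) - phat i) ≤ 2 * r := by
      have hp : normInfPlus (fun i => (pstar i : ℝ) - phat i) ≤ r :=
        normInfPlus_le hr0 fun i => le_trans (le_abs_self _) (hr i)
      have hm : normInfMinus (fun i => (pstar i : ℝ) - phat i) ≤ r :=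
        normInfMinus_le hr0 fun i => le_trans (neg_le_abs _) (hr i)
      unfold normInfPM; linarith
    set Ap := normInfPlus (fun i => P i - phat i) with hApdef
    set Am := normInfMinus (fun i => P i - phat i) with hAmdef
    have hAp0 : 0 ≤ Ap := normInfPlus_nonneg _
    have hAm0 : 0 ≤ Am := normInfMinus_nonneg _
    have hA : Ap + Am ≤ 2 * r := le_trans hmin h2
    have hPlus : normInfPlus (fun i => (pstar i : ℝ) - ((roundHalfDown (P i) : ℤ) : ℝ)) ≤
        r + Am + 1/2 := by
      refine normInfPlus_le (by linarith) fun i => ?_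
      have h1 : (pstar i : ℝ) - phat i ≤ r := le_trans (le_abs_self _) (hr i)
      have h2' : phat i - P i ≤ Am := by
        have := le_normInfMinus (fun i => P i - phat i) i
        simpa using this
      have h3 : P i - (roundHalfDown (P i) : ℝ) ≤ 1/2 := by
        have := rhd_lb (P i); linarith
      linarith [h2']
    have hMinus : normInfMinus (fun i => (pstar i : ℝ) - ((roundHalfDown (P i) : ℤ) : ℝ)) ≤
        r + Ap + 1/2 := by
      refine normInfMinus_le (by linarith) fun i => ?_
      have h1 : phat i - (pstar i : ℝ) ≤ r := by
        have h := hr i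
        have := neg_le_abs ((pstar i : ℝ) - phat i)
        linarith
      have h2' : P i - phat i ≤ Ap := le_normInfPlus (fun i => P i - phat i) i
      have h3 : (roundHalfDown (P i) : ℝ) - P i ≤ 1/2 := by
        have := rhd_ub (P i); linarith
      simp only [neg_sub]
      linarith
    unfold normInfPM
    linarith
end

section
/- Let M₁ = (V, B₁) and M₂ = (V, B₂) be matroids on a common finite ground set V, both of rank r, with B₁ ∩ B₂ ≠ ∅, and let w ∈ ℤ^V with W = ‖w‖∞ = max_{i∈V} |w_i|. Define g : ℤ^V → ℤ by g(p) = max_{B∈B₁} p(B) + max_{B∈B₂} (w − p)(B). Then there exists p* ∈ ℤ^V minimizing g over ℤ^V with ‖p*‖∞ ≤ rW. -/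
/-- A matroid on a finite ground set `V`, given by its nonempty family of bases
satisfying the symmetric exchange axiom: for any bases `B₁, B₂` and `i ∈ B₁ \ B₂`
there is `j ∈ B₂ \ B₁` with `B₁ \ {i} ∪ {j}` and `B₂ \ {j} ∪ {i}` both bases. -/
structure BaseFamily (V : Type*) [DecidableEq V] where
  bases : Finset (Finset V)
  nonempty : bases.Nonempty
  exchange : ∀ B₁ ∈ bases, ∀ B₂ ∈ bases, ∀ i ∈ B₁ \ B₂, ∃ j ∈ B₂ \ B₁,
    insert j (B₁.erase i) ∈ bases ∧ insert i (B₂.erase j) ∈ bases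

/-- The maximum `v`-weight `max_{B ∈ B} v(B)` of a base. -/
def BaseFamily.maxWeight {V : Type*} [DecidableEq V] (M : BaseFamily V) (v : V → ℤ) : ℤ :=
  M.bases.sup' M.nonempty fun B => ∑ i ∈ B, v i

/-- The family `B^v = argmax_{B ∈ B} v(B)` of maximum-`v`-weight bases. -/
def BaseFamily.argmax {V : Type*} [DecidableEq V] (M : BaseFamily V) (v : V → ℤ) :
    Finset (Finset V) :=
  M.bases.filter fun B => ∑ i ∈ B, v i = M.maxWeight v

lemma BaseFamily.argmax_nonempty {V : Type*} [DecidableEq V] (M : BaseFamily V) (v : V → ℤ) :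
    (M.argmax v).Nonempty := by
  obtain ⟨B, hB, hEq⟩ := Finset.exists_mem_eq_sup' M.nonempty fun B : Finset V => ∑ i ∈ B, v i
  exact ⟨B, Finset.mem_filter.2 ⟨hB, hEq.symm⟩⟩

/-!
The dual objective `g` is L-convex: it is submodular on the lattice `ℤ^V` and, both matroids
having rank `r`, invariant under `p ↦ p + c·𝟙`. Submodularity of `p ↦ max_B p(B)` is reduced by
induction to the local inequality for two unit vectors, which is where the exchange axiom enters.
For such functions a point that no upward `0/1` step improves is a global minimizer. Steepest
descent from `0` makes such steps, each lowering `g` by at least one; since `g 0 ≤ rW` and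
`g ≥ w(B₀) ≥ -rW` for a common base `B₀`, it stops at a minimizer with `0 ≤ p ≤ 2rW`, and
shifting by `-rW` gives the bound.
-/

namespace Multiset

variable {V : Type*} [DecidableEq V]

def countVec (s : Multiset V) : V → ℤ := fun k => s.count k

@[simp]
lemma countVec_zero : (0 : Multiset V).countVec = 0 := by
  ext k; simp [countVec]

lemma countVec_cons (j : V) (s : Multiset V) :
    (j ::ₘ s).countVec = s.countVec + Pi.single j 1 := by
  ext k; simp [countVec, Multiset.count_cons, Pi.single_apply]

lemma exists_countVec_eq [Fintype V] {a : V → ℤ} (ha : 0 ≤ a) :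
    ∃ s : Multiset V, s.countVec = a :=
  ⟨Finsupp.toMultiset (Finsupp.equivFunOnFinite.symm fun k => (a k).toNat),
    funext fun k => by simp [countVec, Int.toNat_of_nonneg (ha k)]⟩

end Multiset

namespace BaseFamily

variable {V : Type*} [DecidableEq V] (M : BaseFamily V)

lemma sum_le_maxWeight {v : V → ℤ} {B : Finset V} (hB : B ∈ M.bases) :
    ∑ i ∈ B, v i ≤ M.maxWeight v :=
  Finset.le_sup' (fun B : Finset V => ∑ i ∈ B, v i) hB

lemma exists_sum_eq_maxWeight (v : V → ℤ) : ∃ B ∈ M.bases, ∑ i ∈ B, v i = M.maxWeight v := by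
  obtain ⟨B, hB⟩ := M.argmax_nonempty v
  exact ⟨B, Finset.mem_filter.1 hB⟩

variable {M} in
lemma maxWeight_le_mul {r : ℕ} (hr : ∀ B ∈ M.bases, B.card = r) {v : V → ℤ} {c : ℤ}
    (hv : ∀ i, v i ≤ c) : M.maxWeight v ≤ r * c :=
  Finset.sup'_le _ _ fun B hB => by
    simpa [hr B hB] using Finset.sum_le_card_nsmul B v c fun i _ => hv i

variable {M} in
lemma maxWeight_add_intCast {r : ℕ} (hr : ∀ B ∈ M.bases, B.card = r) (v : V → ℤ) (c : ℤ) :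
    M.maxWeight (v + c) = M.maxWeight v + r * c := by
  have hsum : ∀ B ∈ M.bases, ∑ i ∈ B, (v + c) i = ∑ i ∈ B, v i + r * c := fun B hB => by
    simp [Finset.sum_add_distrib, hr B hB]
  apply le_antisymm
  · refine Finset.sup'_le _ _ fun B hB => ?_
    rw [hsum B hB]
    linarith [M.sum_le_maxWeight (v := v) hB]
  · obtain ⟨B, hB, hEq⟩ := M.exists_sum_eq_maxWeight v
    rw [← hEq, ← hsum B hB]
    exact M.sum_le_maxWeight hB

lemma sum_add_single (B : Finset V) (p : V → ℤ) (i : V) :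
    ∑ k ∈ B, (p + Pi.single i 1 : V → ℤ) k = ∑ k ∈ B, p k + if i ∈ B then 1 else 0 := by
  simp [Finset.sum_add_distrib, Finset.sum_pi_single']

lemma maxWeight_add_single_add_single {i j : V} (hij : i ≠ j) (p : V → ℤ) :
    M.maxWeight p + M.maxWeight (p + Pi.single i 1 + Pi.single j 1) ≤
      M.maxWeight (p + Pi.single i 1) + M.maxWeight (p + Pi.single j 1) := by
  obtain ⟨A, hA, hpA⟩ := M.exists_sum_eq_maxWeight p
  obtain ⟨C, hC, hpC⟩ := M.exists_sum_eq_maxWeight (p + Pi.single i 1 + Pi.single j 1)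
  rw [← hpA, ← hpC, sum_add_single, sum_add_single]
  by_cases hi : i ∈ C \ A
  · -- exchanging `i ∈ C \ A` against some `k ∈ A \ C` preserves the total `p`-weight of the pair
    obtain ⟨k, hk, hC', hA'⟩ := M.exchange C hC A hA i hi
    rw [Finset.mem_sdiff] at hi hk
    have h₁ := M.sum_le_maxWeight (v := p + Pi.single i 1) hA'
    have h₂ := M.sum_le_maxWeight (v := p + Pi.single j 1) hC'
    rw [sum_add_single, Finset.sum_insert (by simp [hi.2]), Finset.sum_erase_eq_sub hk.1,
      if_pos (Finset.mem_insert_self i _)] at h₁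
    rw [sum_add_single, Finset.sum_insert (by simp [hk.2]), Finset.sum_erase_eq_sub hi.1] at h₂
    have hj : (if j ∈ C then 1 else 0 : ℤ) ≤ if j ∈ insert k (C.erase i) then 1 else 0 := by
      split_ifs <;> simp_all
    rw [if_pos hi.1]
    linarith
  · have h₁ := M.sum_le_maxWeight (v := p + Pi.single i 1) hA
    have h₂ := M.sum_le_maxWeight (v := p + Pi.single j 1) hC
    rw [sum_add_single] at h₁ h₂
    have hi' : (if i ∈ C then 1 else 0 : ℤ) ≤ if i ∈ A then 1 else 0 := by
      split_ifs <;> simp_all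
    linarith

lemma maxWeight_add_countVec_add_single {s : Multiset V} {i : V} (hi : i ∉ s) (p : V → ℤ) :
    M.maxWeight (p + s.countVec + Pi.single i 1) + M.maxWeight p ≤
      M.maxWeight (p + Pi.single i 1) + M.maxWeight (p + s.countVec) := by
  induction s using Multiset.induction_on with
  | empty => simp [add_comm]
  | cons j s ih =>
    rw [Multiset.mem_cons, not_or] at hi
    have hloc := M.maxWeight_add_single_add_single hi.1 (p + s.countVec)
    have ih := ih hi.2
    rw [Multiset.countVec_cons, ← add_assoc, show p + s.countVec + Pi.single j 1 + Pi.single i 1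
      = p + s.countVec + Pi.single i 1 + Pi.single j 1 by abel]
    linarith

lemma maxWeight_add_countVec_add_countVec {s t : Multiset V} (hst : Disjoint s t) (p : V → ℤ) :
    M.maxWeight (p + s.countVec + t.countVec) + M.maxWeight p ≤
      M.maxWeight (p + s.countVec) + M.maxWeight (p + t.countVec) := by
  induction s using Multiset.induction_on with
  | empty => simp [add_comm]
  | cons i s ih =>
    rw [Multiset.disjoint_cons_left] at hst
    have hstep := M.maxWeight_add_countVec_add_single hst.1 (p + s.countVec)
    have ih := ih hst.2
    rw [Multiset.countVec_cons, ← add_assoc, show p + s.countVec + Pi.single i 1 + t.countVec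
      = p + s.countVec + t.countVec + Pi.single i 1 by abel]
    linarith

lemma maxWeight_sup_add_maxWeight_inf [Fintype V] (x y : V → ℤ) :
    M.maxWeight (x ⊔ y) + M.maxWeight (x ⊓ y) ≤ M.maxWeight x + M.maxWeight y := by
  obtain ⟨s, hs⟩ := Multiset.exists_countVec_eq (sub_nonneg.2 (inf_le_left : x ⊓ y ≤ x))
  obtain ⟨t, ht⟩ := Multiset.exists_countVec_eq (sub_nonneg.2 (inf_le_right : x ⊓ y ≤ y))
  have hst : Disjoint s t := Multiset.disjoint_left.2 fun {k} hks hkt => by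
    rw [← Multiset.count_pos] at hks hkt
    have hxk := congrFun hs k
    have hyk := congrFun ht k
    simp only [Multiset.countVec, Pi.sub_apply, Pi.inf_apply] at hxk hyk
    omega
  have hsup : x ⊓ y + (x - x ⊓ y) + (y - x ⊓ y) = x ⊔ y := by
    ext k; simp only [Pi.add_apply, Pi.sub_apply, Pi.inf_apply, Pi.sup_apply]; omega
  have := M.maxWeight_add_countVec_add_countVec hst (x ⊓ y)
  rw [hs, ht, hsup, add_sub_cancel, add_sub_cancel] at this
  linarith

end BaseFamily

section UpwardLocalMin

variable {V : Type*}

def IsUpwardLocalMin (G : (V → ℤ) → ℤ) (p : V → ℤ) : Prop :=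
  ∀ d : V → ℤ, 0 ≤ d → d ≤ 1 → G p ≤ G (p + d)

lemma IsUpwardLocalMin.apply_le [Fintype V] {G : (V → ℤ) → ℤ}
    (hsub : ∀ x y, G (x ⊔ y) + G (x ⊓ y) ≤ G x + G y) (hshift : ∀ x (c : ℤ), G (x + c) = G x)
    {p : V → ℤ} (hp : IsUpwardLocalMin G p) (q : V → ℤ) : G p ≤ G q := by
  have hbounded : ∀ n : ℤ, 0 ≤ n → ∀ q, p ≤ q → q ≤ p + n → G p ≤ G q := by
    intro n hn
    induction n, hn using Int.leInduction with
    | base =>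
      intro q hpq hqp
      simp only [Int.cast_zero, add_zero] at hqp
      rw [le_antisymm hqp hpq]
    | succ n hn ih =>
      intro q hpq hqp
      set d := q ⊔ (p + n) - (p + n)
      have hup : G p ≤ G (q ⊔ (p + n)) := calc
        G p ≤ G (p + d) := hp d (sub_nonneg.2 le_sup_right) fun k => by
          have := hqp k
          simp only [Pi.add_apply, Pi.intCast_apply, Int.cast_add, Int.cast_one, Pi.one_apply,
            Int.cast_id] at this
          simp only [d, Pi.sub_apply, Pi.sup_apply, Pi.add_apply, Pi.intCast_apply, Pi.one_apply,
            Int.cast_id]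
          omega
        _ = G (p + d + n) := (hshift _ n).symm
        _ = G (q ⊔ (p + n)) := by simp only [d]; abel_nf
      have hdown := ih (q ⊓ (p + n)) (le_inf hpq fun k => by
        simp only [Pi.add_apply, Pi.intCast_apply, Int.cast_id]; omega) inf_le_right
      have := hsub q (p + n)
      rw [hshift] at this
      linarith
  obtain ⟨c, hc0, hc⟩ : ∃ c : ℤ, 0 ≤ c ∧ ∀ k, |p k - q k| ≤ c :=
    ⟨∑ k, |p k - q k|, Finset.sum_nonneg fun k _ => abs_nonneg _, fun k =>
      Finset.single_le_sum (f := fun k => |p k - q k|) (fun k _ => abs_nonneg _)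
        (Finset.mem_univ k)⟩
  rw [← hshift q c]
  refine hbounded (2 * c) (by omega) _ (fun k => ?_) fun k => ?_ <;>
  · have := abs_le.1 (hc k)
    simp only [Pi.add_apply, Pi.intCast_apply, Int.cast_id]
    omega

/-- Steepest descent from `0`: a minimizer of `G` on `{p | 0 ≤ p ≤ G 0 - G p}` is an upward local
minimum, since an improving upward `0/1` step would stay in that set. -/
lemma exists_isUpwardLocalMin_le {G : (V → ℤ) → ℤ} {m : ℤ} (hm : ∀ p, m ≤ G p) :
    ∃ p, IsUpwardLocalMin G p ∧ 0 ≤ p ∧ ∀ k, p k ≤ G 0 - G p := by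
  obtain ⟨z, ⟨p, hp0, hpG, rfl⟩, hleast⟩ := Int.exists_least_of_bdd
    (P := fun z => ∃ p : V → ℤ, 0 ≤ p ∧ (∀ k, p k ≤ G 0 - G p) ∧ G p = z)
    ⟨m, fun _ ⟨p, _, _, hp⟩ => hp ▸ hm p⟩ ⟨G 0, 0, le_rfl, fun _ => by simp, rfl⟩
  refine ⟨p, fun d hd0 hd1 => ?_, hp0, hpG⟩
  by_contra! hlt
  refine (hleast _ ⟨p + d, add_nonneg hp0 hd0, fun k => ?_, rfl⟩).not_gt hlt
  have hpk := hpG k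
  have hdk := hd1 k
  simp only [Pi.add_apply, Pi.one_apply] at hdk ⊢
  omega

end UpwardLocalMin

namespace BaseFamily

variable {V : Type*} [DecidableEq V]

def dualObj (M₁ M₂ : BaseFamily V) (w p : V → ℤ) : ℤ :=
  M₁.maxWeight p + M₂.maxWeight (w - p)

variable {M₁ M₂ : BaseFamily V} {w : V → ℤ}

lemma dualObj_sup_add_dualObj_inf [Fintype V] (x y : V → ℤ) :
    dualObj M₁ M₂ w (x ⊔ y) + dualObj M₁ M₂ w (x ⊓ y) ≤
      dualObj M₁ M₂ w x + dualObj M₁ M₂ w y := by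
  have h₁ := M₁.maxWeight_sup_add_maxWeight_inf x y
  have h₂ := M₂.maxWeight_sup_add_maxWeight_inf (w - x) (w - y)
  rw [← sub_inf, ← sub_sup] at h₂
  unfold dualObj
  linarith

lemma dualObj_add_intCast {r : ℕ} (hr₁ : ∀ B ∈ M₁.bases, B.card = r)
    (hr₂ : ∀ B ∈ M₂.bases, B.card = r) (p : V → ℤ) (c : ℤ) :
    dualObj M₁ M₂ w (p + c) = dualObj M₁ M₂ w p := by
  have hsub : w - (p + c) = w - p + ((-c : ℤ) : V → ℤ) := by push_cast; abel
  rw [dualObj, dualObj, hsub, maxWeight_add_intCast hr₁, maxWeight_add_intCast hr₂]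
  ring

lemma sum_le_dualObj {B : Finset V} (hB₁ : B ∈ M₁.bases) (hB₂ : B ∈ M₂.bases) (p : V → ℤ) :
    ∑ i ∈ B, w i ≤ dualObj M₁ M₂ w p := by
  have h₁ := M₁.sum_le_maxWeight (v := p) hB₁
  have h₂ := M₂.sum_le_maxWeight (v := w - p) hB₂
  simp only [Pi.sub_apply, Finset.sum_sub_distrib] at h₂
  unfold dualObj
  linarith

end BaseFamily

open BaseFamily

/-- For two rank-`r` matroids `M₁, M₂` on `V` with a common base and weights `w` with
`W = ‖w‖∞`, there is a minimizer `p*` of the dual objective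
`g(p) = max_{B∈B₁} p(B) + max_{B∈B₂} (w − p)(B)` with `‖p*‖∞ ≤ rW`. -/
theorem stmt10 {V : Type*} [DecidableEq V] [Fintype V] [Nonempty V]
    (M₁ M₂ : BaseFamily V) (r : ℕ)
    (hr₁ : ∀ B ∈ M₁.bases, B.card = r) (hr₂ : ∀ B ∈ M₂.bases, B.card = r)
    (hcommon : ∃ B, B ∈ M₁.bases ∧ B ∈ M₂.bases)
    (w : V → ℤ) (W : ℤ)
    (hW : W = Finset.univ.sup' Finset.univ_nonempty fun i => |w i|) :
    ∃ pstar : V → ℤ,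
      (∀ p : V → ℤ,
        M₁.maxWeight pstar + M₂.maxWeight (fun i => w i - pstar i) ≤
          M₁.maxWeight p + M₂.maxWeight (fun i => w i - p i)) ∧
      ∀ i, |pstar i| ≤ (r : ℤ) * W := by
  obtain ⟨B₀, hB₁, hB₂⟩ := hcommon
  have hwW : ∀ i, |w i| ≤ W := fun i => hW ▸ Finset.le_sup' (fun i => |w i|) (Finset.mem_univ i)
  obtain ⟨p, hloc, hp0, hpg⟩ := exists_isUpwardLocalMin_le (sum_le_dualObj (w := w) hB₁ hB₂)
  have hmin := hloc.apply_le dualObj_sup_add_dualObj_inf (dualObj_add_intCast hr₁ hr₂)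
  have hg0 : dualObj M₁ M₂ w 0 ≤ 0 + r * W :=
    add_le_add (maxWeight_le_mul hr₁ fun _ => le_rfl)
      (maxWeight_le_mul hr₂ fun i => by simpa using (abs_le.1 (hwW i)).2)
  have hgp : -(r * W) ≤ dualObj M₁ M₂ w p := by
    refine le_trans ?_ (sum_le_dualObj hB₁ hB₂ p)
    simpa [hr₁ B₀ hB₁] using Finset.card_nsmul_le_sum B₀ w (-W) fun i _ => (abs_le.1 (hwW i)).1
  refine ⟨p + ((-(r * W) : ℤ) : V → ℤ), fun q => ?_, fun i => ?_⟩
  · exact (dualObj_add_intCast hr₁ hr₂ p _).trans_le (hmin q)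
  · have h₀ : 0 ≤ p i := hp0 i
    have h₁ := hpg i
    simp only [Pi.add_apply, Pi.intCast_apply, Int.cast_id]
    rw [abs_le]
    constructor <;> linarith
end
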